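/- Let θ ∈ ℝ, let c > 0, and let f(λ) = (1/2π)|1 + θe^{iλ}|² be the spectral density of the MA(1) process z_t = ε_t + θ ε_{t−1}. Then for any s ∈ ℂ with Im s > 0, the equation z = −1/s + (1/2π)∫_0^{2π}[c·s + (2πf(λ))^{-1}]^{-1} dλ is equivalent to z = −1/s + 1/(cs) + (1/(c²s²)) · 1/√((1/(cs) + 1 + θ²)² − 4θ²), where √· is the complex square root with nonnegative imaginary part. In particular, when θ = 0 this reduces to z = −1/s + 1/(cs + 1), the equation characterising the standard Marčenko-Pastur law of index c. -/

import Mathlib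

open MeasureTheory Complex Real Filter Topology

/-- The complex square root with nonnegative imaginary part. -/
noncomputable def sqrtIm (z : ℂ) : ℂ :=
  if 0 ≤ (z ^ (1 / 2 : ℂ)).im then z ^ (1 / 2 : ℂ) else -(z ^ (1 / 2 : ℂ))

/-!
With `a = cs` and `w(λ) = 2πf(λ) = 1 + θ² + 2θ cos λ`, the identity
`(a + w⁻¹)⁻¹ = a⁻¹ - a⁻²(a⁻¹ + w)⁻¹` reduces everything to `∫₀^{2π} dλ / (B + 2θ cos λ)` with
`B = a⁻¹ + 1 + θ²`, which has `Im B < 0`. Substituting `u = e^{iλ}` turns this into the contour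
integral of `1 / (iθ(u - p)(u - q))` over the unit circle, where `p, q` are the roots of
`θr² + Br + θ`. Since `pq = 1` and `B` is not real, exactly one root lies inside the disc, and
the integral equals `2π / (θ(p - q))`. Finally `(θ(p - q))² = B² - 4θ²`, and the integral has
positive imaginary part, so `-θ(p - q)` is the square root of `B² - 4θ²` in the upper half-plane.
-/

open Metric ComplexConjugate

lemma sqrtIm_sq (z : ℂ) : sqrtIm z ^ 2 = z := by
  unfold sqrtIm
  split_ifs <;> simp

lemma sqrtIm_im_nonneg (z : ℂ) : 0 ≤ (sqrtIm z).im := by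
  unfold sqrtIm
  split_ifs with h
  · exact h
  · rw [neg_im]; linarith

lemma sqrtIm_sq_of_im_neg {w : ℂ} (hw : w.im < 0) : sqrtIm (w ^ 2) = -w := by
  have h : (sqrtIm (w ^ 2) - w) * (sqrtIm (w ^ 2) + w) = 0 := by
    linear_combination sqrtIm_sq (w ^ 2)
  rcases mul_eq_zero.1 h with h | h
  · have := sqrtIm_im_nonneg (w ^ 2)
    rw [sub_eq_zero.1 h] at this
    linarith
  · exact eq_neg_of_add_eq_zero_left h

lemma circleIntegral_inv_sub_mul_sub {p q : ℂ} (hp : ‖p‖ < 1) (hq : 1 < ‖q‖) :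
    (∮ z in C(0, 1), ((z - p) * (z - q))⁻¹) = 2 * π * I / (p - q) := by
  have hq_ne : ∀ z ∈ closedBall (0 : ℂ) 1, z - q ≠ 0 := fun z hz h => by
    rw [mem_closedBall_zero_iff, sub_eq_zero.1 h] at hz
    linarith
  have hp_ne : ∀ z ∈ sphere (0 : ℂ) 1, z - p ≠ 0 := fun z hz h => by
    rw [mem_sphere_zero_iff_norm, sub_eq_zero.1 h] at hz
    linarith
  have hpq : p - q ≠ 0 := fun h => by rw [sub_eq_zero.1 h] at hp; linarith
  have hinside : (∮ z in C(0, 1), (z - p)⁻¹) = 2 * π * I :=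
    circleIntegral.integral_sub_inv_of_mem_ball (by simpa using hp)
  have houtside : (∮ z in C(0, 1), (z - q)⁻¹) = 0 :=
    DiffContOnCl.circleIntegral_eq_zero zero_le_one <|
      (DifferentiableOn.inv (by fun_prop) hq_ne).diffContOnCl_ball subset_rfl
  calc (∮ z in C(0, 1), ((z - p) * (z - q))⁻¹)
      = ∮ z in C(0, 1), (p - q)⁻¹ * ((z - p)⁻¹ - (z - q)⁻¹) := by
        refine circleIntegral.integral_congr zero_le_one fun z hz => ?_
        have := hp_ne z hz
        have := hq_ne z (sphere_subset_closedBall hz)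
        field_simp
        ring
    _ = (p - q)⁻¹ * (2 * π * I - 0) := by
        rw [circleIntegral.integral_const_mul, circleIntegral.integral_sub, hinside, houtside]
        · exact (ContinuousOn.inv₀ (by fun_prop) hp_ne).circleIntegrable zero_le_one
        · exact (ContinuousOn.inv₀ (by fun_prop) fun z hz => hq_ne z
            (sphere_subset_closedBall hz)).circleIntegrable zero_le_one
    _ = 2 * π * I / (p - q) := by ring

lemma add_two_mul_cos_eq_circleMap {θ B p q : ℂ} (hpq : p * q = 1) (hsum : θ * (p + q) = -B)
    (x : ℝ) :
    B + 2 * θ * Real.cos x =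
      θ * (circleMap 0 1 x - p) * (circleMap 0 1 x - q) / circleMap 0 1 x := by
  set u := circleMap 0 1 x
  have hu : u ≠ 0 := by simp [u, circleMap]
  have hcos : 2 * (Real.cos x : ℂ) * u = u ^ 2 + 1 := by
    simp only [u, circleMap_zero, ofReal_one, one_mul, ofReal_cos, two_cos]
    rw [neg_mul, Complex.exp_neg]
    field_simp
  rw [eq_div_iff hu]
  linear_combination θ * hcos + u * hsum - θ * hpq

lemma integral_inv_add_two_mul_cos_of_roots {θ B p q : ℂ} (hθ : θ ≠ 0) (hpq : p * q = 1)
    (hsum : θ * (p + q) = -B) (hp : ‖p‖ < 1) (hq : 1 < ‖q‖) :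
    ∫ x in (0 : ℝ)..2 * π, (B + 2 * θ * Real.cos x)⁻¹ = 2 * π / (θ * (p - q)) := by
  have hpq' : p - q ≠ 0 := fun h => by rw [sub_eq_zero.1 h] at hp; linarith
  calc ∫ x in (0 : ℝ)..2 * π, (B + 2 * θ * Real.cos x)⁻¹
      = ∫ x in (0 : ℝ)..2 * π, (I * θ)⁻¹ *
          (deriv (circleMap 0 1) x • ((circleMap 0 1 x - p) * (circleMap 0 1 x - q))⁻¹) := by
        refine intervalIntegral.integral_congr fun x _ => ?_
        rw [add_two_mul_cos_eq_circleMap hpq hsum, deriv_circleMap, smul_eq_mul]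
        have hu : circleMap 0 1 x ≠ 0 := by simp [circleMap]
        field_simp
    _ = (I * θ)⁻¹ * (2 * π * I / (p - q)) := by
        rw [intervalIntegral.integral_const_mul, ← circleIntegral_inv_sub_mul_sub hp hq,
          circleIntegral]
    _ = 2 * π / (θ * (p - q)) := by
        field_simp

lemma norm_ne_one_of_mul_eq_one {θ : ℝ} {B r r' : ℂ} (hB : B.im ≠ 0) (hrr' : r * r' = 1)
    (hsum : θ * (r + r') = -B) : ‖r‖ ≠ 1 := by
  intro hr
  have hr' : r' = conj r := (eq_inv_of_mul_eq_one_right hrr').trans (inv_eq_conj hr)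
  have him := congrArg im hsum
  rw [hr', add_conj] at him
  simp_all

lemma exists_roots_norm_lt_one_lt_norm {θ : ℝ} (hθ : θ ≠ 0) {B : ℂ} (hB : B.im ≠ 0) :
    ∃ p q : ℂ, p * q = 1 ∧ θ * (p + q) = -B ∧ ‖p‖ < 1 ∧ 1 < ‖q‖ := by
  have hθ' : (θ : ℂ) ≠ 0 := ofReal_ne_zero.2 hθ
  set d := sqrtIm (B ^ 2 - 4 * θ ^ 2)
  have hd : d ^ 2 = B ^ 2 - 4 * θ ^ 2 := sqrtIm_sq _
  set r₁ := (-B + d) / (2 * θ)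
  set r₂ := (-B - d) / (2 * θ)
  have hprod : r₁ * r₂ = 1 := by
    simp only [r₁, r₂]
    field_simp
    linear_combination -hd
  have hsum : (θ : ℂ) * (r₁ + r₂) = -B := by
    simp only [r₁, r₂]
    field_simp
    ring
  have hnorm : ‖r₁‖ * ‖r₂‖ = 1 := by rw [← norm_mul, hprod, norm_one]
  rcases (norm_ne_one_of_mul_eq_one hB hprod hsum).lt_or_gt with h | h
  · refine ⟨r₁, r₂, hprod, hsum, h, ?_⟩
    by_contra! h₂
    nlinarith [norm_nonneg r₁, norm_nonneg r₂]
  · refine ⟨r₂, r₁, by rw [mul_comm, hprod], by rw [add_comm, hsum], ?_, h⟩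
    by_contra! h₂
    nlinarith [norm_nonneg r₁, norm_nonneg r₂]

lemma im_add_two_mul_cos (B : ℂ) (θ x : ℝ) : (B + 2 * θ * Real.cos x).im = B.im := by
  simp [-ofReal_cos]

lemma continuous_inv_add_two_mul_cos {B : ℂ} (hB : B.im ≠ 0) (θ : ℝ) :
    Continuous fun x : ℝ => (B + 2 * θ * Real.cos x)⁻¹ :=
  Continuous.inv₀ (by fun_prop) fun x h => hB (by rw [← im_add_two_mul_cos B θ x, h, zero_im])

lemma integral_inv_add_two_mul_cos_im_pos (θ : ℝ) {B : ℂ} (hB : B.im < 0) :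
    0 < (∫ x in (0 : ℝ)..2 * π, (B + 2 * θ * Real.cos x)⁻¹).im := by
  have hcont := continuous_inv_add_two_mul_cos hB.ne θ
  rw [← imCLM_apply, ← ContinuousLinearMap.intervalIntegral_comp_comm _
    (hcont.intervalIntegrable _ _)]
  refine intervalIntegral.intervalIntegral_pos_of_pos_on
    ((continuous_im.comp hcont).intervalIntegrable _ _) (fun x _ => ?_) (by positivity)
  rw [imCLM_apply, inv_im, im_add_two_mul_cos]
  refine div_pos (by linarith) (normSq_pos.2 fun h => hB.ne ?_)
  rw [← im_add_two_mul_cos B θ x, h, zero_im]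

theorem integral_inv_add_two_mul_cos (θ : ℝ) {B : ℂ} (hB : B.im < 0) :
    ∫ x in (0 : ℝ)..2 * π, (B + 2 * θ * Real.cos x)⁻¹ =
      -(2 * π) / sqrtIm (B ^ 2 - 4 * θ ^ 2) := by
  rcases eq_or_ne θ 0 with rfl | hθ
  · simp [sqrtIm_sq_of_im_neg hB, div_eq_mul_inv]
  obtain ⟨p, q, hpq, hsum, hp, hq⟩ := exists_roots_norm_lt_one_lt_norm hθ hB.ne
  have hint := integral_inv_add_two_mul_cos_of_roots (ofReal_ne_zero.2 hθ) hpq hsum hp hq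
  have hsq : (θ * (p - q)) ^ 2 = B ^ 2 - 4 * θ ^ 2 := by
    linear_combination (θ * (p + q) - B) * hsum - 4 * θ ^ 2 * hpq
  have him : (θ * (p - q) : ℂ).im < 0 := by
    have hpos := integral_inv_add_two_mul_cos_im_pos θ hB
    rw [hint, div_eq_mul_inv, ← ofReal_ofNat, ← ofReal_mul, im_ofReal_mul, inv_im] at hpos
    by_contra! h
    have : -(θ * (p - q) : ℂ).im / normSq (θ * (p - q)) ≤ 0 :=
      div_nonpos_of_nonpos_of_nonneg (by linarith) (normSq_nonneg _)
    nlinarith [Real.pi_pos]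
  rw [hint, ← hsq, sqrtIm_sq_of_im_neg him, div_neg, neg_div, neg_neg]

lemma norm_one_add_mul_exp_I_mul_sq (θ x : ℝ) :
    ‖1 + θ * exp (I * x)‖ ^ 2 = 1 + θ ^ 2 + 2 * θ * Real.cos x := by
  rw [mul_comm I, exp_mul_I, ← ofReal_cos, ← ofReal_sin, Complex.sq_norm, normSq_apply]
  simp only [add_re, add_im, one_re, one_im, mul_re, mul_im, ofReal_re, ofReal_im, I_re, I_im]
  nlinarith [Real.sin_sq_add_cos_sq x]

-- `1 + θ² + 2θ cos x = (1 + θ cos x)² + (θ sin x)²` vanishes only where `sin x = 0`.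
lemma ae_one_add_sq_add_two_mul_cos_ne_zero (θ : ℝ) :
    ∀ᵐ x : ℝ, 1 + θ ^ 2 + 2 * θ * Real.cos x ≠ 0 := by
  have hsin : {x : ℝ | Real.sin x = 0}.Countable :=
    (Set.countable_range fun n : ℤ => n * π).mono fun x hx => Real.sin_eq_zero_iff.1 hx
  refine measure_mono_null (fun x hx => ?_) (hsin.measure_zero volume)
  have hx : (1 + θ * Real.cos x) ^ 2 + (θ * Real.sin x) ^ 2 = 0 := by
    have hx : 1 + θ ^ 2 + 2 * θ * Real.cos x = 0 := not_not.1 hx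
    nlinarith [Real.sin_sq_add_cos_sq x]
  have hcos : 1 + θ * Real.cos x = 0 := by nlinarith [sq_nonneg (θ * Real.sin x)]
  have hθsin : θ * Real.sin x = 0 := by nlinarith [sq_nonneg (1 + θ * Real.cos x)]
  rcases mul_eq_zero.1 hθsin with hθ | hsin
  · simp [hθ] at hcos
  · exact hsin

lemma inv_add_inv_eq_inv_sub {a w : ℂ} (ha : a ≠ 0) (hw : w ≠ 0) (haw : a * w + 1 ≠ 0) :
    (a + w⁻¹)⁻¹ = a⁻¹ - a⁻¹ ^ 2 * (a⁻¹ + w)⁻¹ := by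
  rw [show a + w⁻¹ = (a * w + 1) / w by field_simp,
    show a⁻¹ + w = (a * w + 1) / a by field_simp; ring, inv_div, inv_div, eq_sub_iff_add_eq]
  field_simp
  exact div_self (by rwa [mul_comm])

lemma im_inv_neg_of_im_pos {a : ℂ} (ha : 0 < a.im) : a⁻¹.im < 0 := by
  rw [inv_im]
  exact div_neg_of_neg_of_pos (neg_neg_of_pos ha) (normSq_pos.2 fun h => by simp [h] at ha)

lemma integral_inv_add_inv_one_add_sq_add_two_mul_cos {a : ℂ} (ha : 0 < a.im) (θ : ℝ) :
    ((1 / (2 * π) : ℝ) : ℂ) *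
        ∫ x in (0 : ℝ)..2 * π, (a + ((1 + θ ^ 2 + 2 * θ * Real.cos x : ℝ) : ℂ)⁻¹)⁻¹ =
      a⁻¹ + a⁻¹ ^ 2 / sqrtIm ((a⁻¹ + 1 + θ ^ 2) ^ 2 - 4 * θ ^ 2) := by
  have ha0 : a ≠ 0 := fun h => by simp [h] at ha
  have hainv := im_inv_neg_of_im_pos ha
  set B := a⁻¹ + 1 + (θ : ℂ) ^ 2
  have hB : B.im < 0 := by simpa [B, ← ofReal_pow] using hainv
  calc ((1 / (2 * π) : ℝ) : ℂ) *
        ∫ x in (0 : ℝ)..2 * π, (a + ((1 + θ ^ 2 + 2 * θ * Real.cos x : ℝ) : ℂ)⁻¹)⁻¹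
      = ((1 / (2 * π) : ℝ) : ℂ) *
          ∫ x in (0 : ℝ)..2 * π, (a⁻¹ - a⁻¹ ^ 2 * (B + 2 * θ * Real.cos x)⁻¹) := by
        congr 1
        refine intervalIntegral.integral_congr_ae ?_
        filter_upwards [ae_one_add_sq_add_two_mul_cos_ne_zero θ] with x hx _
        have hBx : B + 2 * θ * Real.cos x =
            a⁻¹ + ((1 + θ ^ 2 + 2 * θ * Real.cos x : ℝ) : ℂ) := by
          push_cast
          ring
        rw [hBx]
        refine inv_add_inv_eq_inv_sub ha0 (ofReal_ne_zero.2 hx) fun h => ?_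
        have := congrArg im h
        rw [add_im, one_im, add_zero, im_mul_ofReal, zero_im] at this
        exact hx (by simpa [ha.ne'] using this)
    _ = ((1 / (2 * π) : ℝ) : ℂ) *
          (2 * π * a⁻¹ - a⁻¹ ^ 2 * (-(2 * π) / sqrtIm (B ^ 2 - 4 * θ ^ 2))) := by
        rw [intervalIntegral.integral_sub intervalIntegrable_const
          (((continuous_inv_add_two_mul_cos hB.ne θ).intervalIntegrable _ _).const_mul _),
          intervalIntegral.integral_const_mul, integral_inv_add_two_mul_cos θ hB,
          intervalIntegral.integral_const]
        simp
    _ = a⁻¹ + a⁻¹ ^ 2 / sqrtIm (B ^ 2 - 4 * θ ^ 2) := by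
        push_cast
        field_simp
        ring

lemma inv_add_inv_sq_div_sqrtIm_sq {a : ℂ} (ha : 0 < a.im) :
    a⁻¹ + a⁻¹ ^ 2 / sqrtIm ((a⁻¹ + 1) ^ 2) = (a + 1)⁻¹ := by
  have ha0 : a ≠ 0 := fun h => by simp [h] at ha
  have ha1 : 1 + a ≠ 0 := fun h => by simpa [ha.ne'] using congrArg im h
  have hb : (a⁻¹ + 1).im < 0 := by simpa using im_inv_neg_of_im_pos ha
  rw [sqrtIm_sq_of_im_neg hb]
  field_simp
  linear_combination (-a) * mul_inv_cancel₀ ha1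

/-- The characterising equation of the LSD for an MA(1) process reduces to
the explicit equation (11); for θ = 0 it is that of the Marčenko-Pastur law. -/
theorem ma1_lsd_equation
    (θ c : ℝ) (hc : 0 < c)
    -- the spectral density of the MA(1) process
    (f : ℝ → ℝ)
    (hf : ∀ lam : ℝ, f lam = (1 / (2 * π)) *
        (‖1 + (θ : ℂ) * Complex.exp (Complex.I * lam)‖) ^ 2)
    (s : ℂ) (hs : 0 < s.im) :
    ∀ z : ℂ,
      ((z = -s⁻¹ + ((1 / (2 * π) : ℝ) : ℂ) *
          ∫ lam in (0:ℝ)..(2 * π), ((c : ℂ) * s + ((2 * π * f lam : ℝ) : ℂ)⁻¹)⁻¹)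
        ↔
        (z = -s⁻¹ + ((c : ℂ) * s)⁻¹ +
          (1 / ((c : ℂ) ^ 2 * s ^ 2)) *
            (sqrtIm ((((c : ℂ) * s)⁻¹ + 1 + (θ : ℂ) ^ 2) ^ 2 - 4 * (θ : ℂ) ^ 2))⁻¹)) ∧
      -- in particular, for θ = 0 the equation characterises the standard
      -- Marčenko-Pastur law of index c
      (θ = 0 →
        ((z = -s⁻¹ + ((1 / (2 * π) : ℝ) : ℂ) *
            ∫ lam in (0:ℝ)..(2 * π), ((c : ℂ) * s + ((2 * π * f lam : ℝ) : ℂ)⁻¹)⁻¹)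
          ↔
          (z = -s⁻¹ + ((c : ℂ) * s + 1)⁻¹))) := by
  intro z
  set a := (c : ℂ) * s
  have ha : 0 < a.im := by rw [im_ofReal_mul]; positivity
  have hweight : ∀ x, 2 * π * f x = 1 + θ ^ 2 + 2 * θ * Real.cos x := fun x => by
    rw [hf, norm_one_add_mul_exp_I_mul_sq]
    field_simp
  have hint : ((1 / (2 * π) : ℝ) : ℂ) *
      ∫ x in (0 : ℝ)..2 * π, (a + ((2 * π * f x : ℝ) : ℂ)⁻¹)⁻¹ =
        a⁻¹ + a⁻¹ ^ 2 / sqrtIm ((a⁻¹ + 1 + θ ^ 2) ^ 2 - 4 * θ ^ 2) := by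
    simp only [hweight]
    exact integral_inv_add_inv_one_add_sq_add_two_mul_cos ha θ
  have hcoef : 1 / ((c : ℂ) ^ 2 * s ^ 2) = a⁻¹ ^ 2 := by ring
  rw [hint, hcoef]
  refine ⟨by rw [← add_assoc, div_eq_mul_inv], fun hθ => ?_⟩
  subst hθ
  rw [show (a⁻¹ + 1 + ((0 : ℝ) : ℂ) ^ 2) ^ 2 - 4 * ((0 : ℝ) : ℂ) ^ 2 = (a⁻¹ + 1) ^ 2 by simp,
    inv_add_inv_sq_div_sqrtIm_sq ha]
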